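/- Let V = (V₋₁ →∂ V₀) be a 2-term cochain complex of k-modules. Define End(V)₀ = {(M,N) ∈ End(V₋₁) × End(V₀) | ∂∘M = N∘∂} with componentwise composition, End(V)₋₁ = Hom(V₀, V₋₁) with product A·A' := A∘∂∘A', δ : End(V)₋₁ → End(V)₀ by δ(A) = (A∘∂, ∂∘A), and bimodule actions (M,N) ▷ A = M∘A and A ◁ (M,N) = A∘N. Then this data forms an associative 2-algebra: δ is an algebra homomorphism, δ is two-sided equivariant (δ((M,N) ▷ A) = (M,N)·δ(A) and δ(A ◁ (M,N)) = δ(A)·(M,N)), and the Peiffer identity δ(A) ▷ A' = A·A' = A ◁ δ(A') holds. -/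

import Mathlib

theorem end_two_algebra {k Vn V₀ : Type*} [CommRing k]
    [AddCommGroup Vn] [AddCommGroup V₀] [Module k Vn] [Module k V₀]
    (d : Vn →ₗ[k] V₀) :
    -- the product on End(V)₋₁ is associative
    (∀ A A' A'' : V₀ →ₗ[k] Vn,
        (A ∘ₗ d ∘ₗ A') ∘ₗ d ∘ₗ A'' = A ∘ₗ d ∘ₗ (A' ∘ₗ d ∘ₗ A'')) ∧
    -- δ lands in End(V)₀
    (∀ A : V₀ →ₗ[k] Vn, d ∘ₗ (A ∘ₗ d) = (d ∘ₗ A) ∘ₗ d) ∧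
    -- δ is an algebra homomorphism
    (∀ A A' : V₀ →ₗ[k] Vn,
        (((A ∘ₗ d ∘ₗ A') ∘ₗ d, d ∘ₗ (A ∘ₗ d ∘ₗ A')) :
            (Vn →ₗ[k] Vn) × (V₀ →ₗ[k] V₀))
          = ((A ∘ₗ d) ∘ₗ (A' ∘ₗ d), (d ∘ₗ A) ∘ₗ (d ∘ₗ A'))) ∧
    -- δ is two-sided equivariant
    (∀ (M : Vn →ₗ[k] Vn) (N : V₀ →ₗ[k] V₀), d ∘ₗ M = N ∘ₗ d →
      ∀ A : V₀ →ₗ[k] Vn,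
        ((((M ∘ₗ A) ∘ₗ d, d ∘ₗ (M ∘ₗ A)) : (Vn →ₗ[k] Vn) × (V₀ →ₗ[k] V₀))
            = (M ∘ₗ (A ∘ₗ d), N ∘ₗ (d ∘ₗ A))) ∧
        ((((A ∘ₗ N) ∘ₗ d, d ∘ₗ (A ∘ₗ N)) : (Vn →ₗ[k] Vn) × (V₀ →ₗ[k] V₀))
            = ((A ∘ₗ d) ∘ₗ M, (d ∘ₗ A) ∘ₗ N))) ∧
    -- Peiffer identity
    (∀ A A' : V₀ →ₗ[k] Vn,
        (A ∘ₗ d) ∘ₗ A' = A ∘ₗ d ∘ₗ A' ∧ A ∘ₗ (d ∘ₗ A') = A ∘ₗ d ∘ₗ A') := by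
  -- `LinearMap.comp` is associative by `rfl`, so only equivariance needs `d ∘ M = N ∘ d`.
  refine ⟨fun _ _ _ => rfl, fun _ => rfl, fun _ _ => rfl, fun M N hMN A => ⟨?_, ?_⟩,
    fun _ _ => ⟨rfl, rfl⟩⟩
  · exact Prod.ext rfl (congrArg (· ∘ₗ A) hMN)
  · exact Prod.ext (congrArg (A ∘ₗ ·) hMN.symm) rfl
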